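/- Let d ≥ 2 and C > 0. There exists λ_0 > 0 such that for every λ ∈ (0, λ_0] and every a ≥ π_d^{−1/d}, μ_λ({ζ : R_0(ζ) > a}) ≤ exp(−C·a^d), where μ_λ is the product probability measure on ℕ^{ℤ^d} whose coordinates ζ(j), j ∈ ℤ^d, are i.i.d. Poisson with parameter λ. -/

import Mathlib

open MeasureTheory
open scoped ENNReal NNReal

noncomputable section

/-- The level-`m` cube `K_i^m` in `ℝ^d`:
`K_i^m = {x : |x^(l) - m·i^(l)| ≤ m/2 for all l}`. -/
def cube (d : ℕ) (m : ℝ) (i : Fin d → ℤ) : Set (EuclideanSpace ℝ (Fin d)) :=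
  {x | ∀ l, |x l - m * (i l : ℝ)| ≤ m / 2}

/-- The distance `ρ(A,B) = inf {|x - y| : x ∈ A, y ∈ B}` between two sets. -/
def rho (d : ℕ) (A B : Set (EuclideanSpace ℝ (Fin d))) : ℝ :=
  sInf (Set.image2 dist A B)

/-- The discrete ball `B_i(r)`: the union of the level-1 cubes `K_j^1` with
`ρ(K_i^1, K_j^1) ≤ r` (and `B_i(0) = ∅`). -/
def dball (d : ℕ) (i : Fin d → ℤ) (r : ℝ) : Set (EuclideanSpace ℝ (Fin d)) :=
  if 0 < r then
    ⋃ j ∈ {j : Fin d → ℤ | rho d (cube d 1 i) (cube d 1 j) ≤ r}, cube d 1 j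
  else ∅

/-- `π_d`, the Lebesgue volume of the unit Euclidean ball in `ℝ^d`. -/
def unitBallVol (d : ℕ) : ℝ :=
  (volume (Metric.ball (0 : EuclideanSpace ℝ (Fin d)) 1)).toReal

/-- `β_d = ⌈3 + 2√d · π_d^(1/d)⌉`. -/
def betaD (d : ℕ) : ℝ :=
  (⌈3 + 2 * Real.sqrt d * (unitBallVol d) ^ ((1 : ℝ) / d)⌉ : ℤ)

/-- The embedding of `ℤ^d` into `ℝ^d`. -/
def embedZ (d : ℕ) (i : Fin d → ℤ) : EuclideanSpace ℝ (Fin d) :=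
  WithLp.toLp 2 (fun l => (i l : ℝ))

/-- `A(K_j^m)`: the union of `K_j^m` with its `3^d - 1` neighbouring level-`m`
cubes, i.e. the cubes `K_i^m` with `‖i - j‖_∞ ≤ 1`. -/
def nbhd (d : ℕ) (m : ℝ) (j : Fin d → ℤ) : Set (EuclideanSpace ℝ (Fin d)) :=
  ⋃ i ∈ {i : Fin d → ℤ | ‖i - j‖ ≤ 1}, cube d m i

/-- The radius `R_i(ζ) = inf {r > 0 : Σ_{j : ρ(K_j^1,K_i^1) ≤ β_d r} ζ(j) ≤ π_d r^d}`
if `ζ i > 0` (with `inf ∅ = +∞`, so the value is taken in `ℝ≥0∞`), and `R_i(ζ) = 0`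
if `ζ i = 0`. -/
def Rad (d : ℕ) (ζ : (Fin d → ℤ) → ℕ) (i : Fin d → ℤ) : ℝ≥0∞ :=
  if ζ i = 0 then 0
  else sInf {t : ℝ≥0∞ | ∃ r : ℝ, 0 < r ∧ t = ENNReal.ofReal r ∧
    ((∑ᶠ j ∈ {j : Fin d → ℤ |
        rho d (cube d 1 j) (cube d 1 i) ≤ betaD d * r}, ζ j : ℕ) : ℝ)
      ≤ unitBallVol d * r ^ d}

/-- The sup norm `‖x‖_∞` on `ℝ^d`. -/
def supNorm (d : ℕ) (x : EuclideanSpace ℝ (Fin d)) : ℝ := ⨆ l, |x l|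

/-- The Poisson mass function with parameter `λ`: `n ↦ e^{−λ} λ^n / n!`. -/
def poissonPMFR (lam : ℝ) (n : ℕ) : ℝ := Real.exp (-lam) * lam ^ n / n.factorial

/-- `μ` is the product probability measure on `ℕ^{ℤ^d}` whose coordinates
`ζ(j)`, `j ∈ ℤ^d`, are i.i.d. Poisson with parameter `λ`, characterized by its
values on cylinder events. -/
def IsIIDPoisson (d : ℕ) (lam : ℝ) (μ : Measure ((Fin d → ℤ) → ℕ)) : Prop :=
  IsProbabilityMeasure μ ∧
  ∀ (F : Finset (Fin d → ℤ)) (k : (Fin d → ℤ) → ℕ),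
    μ {ζ | ∀ j ∈ F, ζ j = k j} = ∏ j ∈ F, ENNReal.ofReal (poissonPMFR lam (k j))

/-!
If `R_0(ζ) > a`, the radius `a` is not admissible in the definition of `R_0`, so the total
`ζ`-mass of the cubes within distance `β_d a` of `K_0` exceeds `T = π_d a^d`. These cubes lie in
a lattice box with at most `K a^d` points, `K` depending only on `d`, as soon as
`a ≥ π_d^{-1/d}`. Bounding the Poisson weights by `λ^k`, a union bound over cylinder events
shows that the mass of `n` sites exceeds `T` with probability at most `(2λ)^T 2^n`, and for
`n ≤ K a^d` this is at most `exp(-C a^d)` once `(2λ)^{π_d} 2^K ≤ e^{-C}`.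
-/

open Finset

lemma unitBallVol_pos {d : ℕ} (hd : 0 < d) : 0 < unitBallVol d := by
  have : Nonempty (Fin d) := ⟨⟨0, hd⟩⟩
  exact ENNReal.toReal_pos (Metric.measure_ball_pos volume 0 one_pos).ne'
    measure_ball_lt_top.ne

lemma betaD_nonneg (d : ℕ) : 0 ≤ betaD d := by
  have : 0 ≤ unitBallVol d := ENNReal.toReal_nonneg
  unfold betaD
  exact_mod_cast Int.ceil_nonneg (by positivity)

lemma embedZ_mem_cube (d : ℕ) (j : Fin d → ℤ) : embedZ d j ∈ cube d 1 j := by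
  intro l
  simp [embedZ]

lemma abs_sub_sub_one_le_rho {d : ℕ} (j i : Fin d → ℤ) (l : Fin d) :
    |(j l : ℝ) - i l| - 1 ≤ rho d (cube d 1 j) (cube d 1 i) := by
  refine le_csInf ⟨_, Set.mem_image2_of_mem (embedZ_mem_cube d j) (embedZ_mem_cube d i)⟩ ?_
  rintro _ ⟨x, hx, y, hy, rfl⟩
  have hxj : |x l - j l| ≤ 1 / 2 := by simpa using hx l
  have hyi : |y l - i l| ≤ 1 / 2 := by simpa using hy l
  have hxy : |x l - y l| ≤ dist x y := by
    simpa [Real.dist_eq] using PiLp.dist_apply_le x y l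
  calc |(j l : ℝ) - i l| - 1 ≤ |x l - y l| := by
        have := abs_sub_le (j l : ℝ) (x l) (i l)
        have := abs_sub_le (x l) (y l) (i l)
        rw [abs_sub_comm] at hxj
        linarith
    _ ≤ dist x y := hxy

def latticeBox (d : ℕ) (i : Fin d → ℤ) (n : ℤ) : Finset (Fin d → ℤ) :=
  Fintype.piFinset fun l => Icc (i l - n) (i l + n)

lemma mem_latticeBox_of_rho_le {d : ℕ} {i j : Fin d → ℤ} {R : ℝ}
    (h : rho d (cube d 1 j) (cube d 1 i) ≤ R) : j ∈ latticeBox d i ⌊R + 1⌋ := by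
  rw [latticeBox, Fintype.mem_piFinset]
  intro l
  have : |j l - i l| ≤ ⌊R + 1⌋ := by
    rw [Int.le_floor]
    push_cast
    linarith [abs_sub_sub_one_le_rho j i l]
  rw [mem_Icc]
  constructor <;> linarith [abs_le.mp this]

lemma card_latticeBox_floor_le (d : ℕ) (i : Fin d → ℤ) {R : ℝ} (hR : 0 ≤ R) :
    ((latticeBox d i ⌊R + 1⌋).card : ℝ) ≤ (2 * R + 3) ^ d := by
  have hn : 0 ≤ ⌊R + 1⌋ := Int.floor_nonneg.mpr (by linarith)
  have hcard : (latticeBox d i ⌊R + 1⌋).card = (2 * ⌊R + 1⌋ + 1).toNat ^ d := by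
    have hside (l : Fin d) :
        (Icc (i l - ⌊R + 1⌋) (i l + ⌊R + 1⌋)).card = (2 * ⌊R + 1⌋ + 1).toNat := by
      rw [Int.card_Icc]
      congr 1
      ring
    simp only [latticeBox, Fintype.card_piFinset, hside, prod_const, card_univ,
      Fintype.card_fin]
  rw [hcard, Nat.cast_pow]
  gcongr
  have : ((2 * ⌊R + 1⌋ + 1).toNat : ℤ) = 2 * ⌊R + 1⌋ + 1 := Int.toNat_of_nonneg (by omega)
  have hfl := Int.floor_le (R + 1)
  calc (((2 * ⌊R + 1⌋ + 1).toNat : ℕ) : ℝ) = 2 * (⌊R + 1⌋ : ℝ) + 1 := by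
        exact_mod_cast this
    _ ≤ 2 * R + 3 := by linarith

lemma Rad_le_ofReal {d : ℕ} (ζ : (Fin d → ℤ) → ℕ) (i : Fin d → ℤ) {r : ℝ} (hr : 0 < r)
    (h : ((∑ j ∈ latticeBox d i ⌊betaD d * r + 1⌋, ζ j : ℕ) : ℝ)
      ≤ unitBallVol d * r ^ d) :
    Rad d ζ i ≤ ENNReal.ofReal r := by
  classical
  unfold Rad
  split_ifs
  · exact zero_le
  refine sInf_le ⟨r, hr, rfl, le_trans ?_ h⟩
  set S := {j | rho d (cube d 1 j) (cube d 1 i) ≤ betaD d * r}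
  have hS : S = ↑((latticeBox d i ⌊betaD d * r + 1⌋).filter (· ∈ S)) := by
    ext j
    simp only [coe_filter]
    exact ⟨fun hj => ⟨mem_latticeBox_of_rho_le hj, hj⟩, And.right⟩
  rw [hS, finsum_mem_coe_finset]
  exact_mod_cast sum_le_sum_of_subset (filter_subset _ _)

lemma poissonPMFR_le_pow {lam : ℝ} (hlam : 0 ≤ lam) (n : ℕ) :
    poissonPMFR lam n ≤ lam ^ n := by
  unfold poissonPMFR
  rw [div_le_iff₀ (by positivity)]
  have hexp : Real.exp (-lam) ≤ 1 := Real.exp_le_one_iff.mpr (by linarith)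
  have hfact : (1 : ℝ) ≤ n.factorial := by exact_mod_cast n.factorial_pos
  calc Real.exp (-lam) * lam ^ n ≤ 1 * lam ^ n := by gcongr
    _ ≤ lam ^ n * n.factorial := by
        rw [one_mul]; exact le_mul_of_one_le_right (by positivity) hfact

lemma ENNReal.tsum_prod_le_prod_tsum {ι α : Type*} [Fintype ι] (f : ι → α → ℝ≥0∞) :
    ∑' k : ι → α, ∏ i, f i (k i) ≤ ∏ i, ∑' a, f i a := by
  classical
  refine ENNReal.summable.tsum_le_of_sum_le fun s => ?_
  let values : Finset α := s.biUnion fun k => univ.image k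
  calc ∑ k ∈ s, ∏ i, f i (k i)
      ≤ ∑ k ∈ Fintype.piFinset fun _ => values, ∏ i, f i (k i) :=
        sum_le_sum_of_subset fun k hk => Fintype.mem_piFinset.mpr fun i =>
          mem_biUnion.mpr ⟨k, hk, mem_image_of_mem k (mem_univ i)⟩
    _ = ∏ i, ∑ a ∈ values, f i a := sum_prod_piFinset _ _
    _ ≤ ∏ i, ∑' a, f i a := by gcongr; exact ENNReal.sum_le_tsum _

lemma ENNReal.tsum_prod_inv_two_pow_le (ι : Type*) [Fintype ι] :
    ∑' k : ι → ℕ, ∏ i, (2⁻¹ : ℝ≥0∞) ^ k i ≤ 2 ^ Fintype.card ι := by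
  calc ∑' k : ι → ℕ, ∏ i, (2⁻¹ : ℝ≥0∞) ^ k i
      ≤ ∏ _i : ι, ∑' n : ℕ, (2⁻¹ : ℝ≥0∞) ^ n :=
        ENNReal.tsum_prod_le_prod_tsum fun _ n => 2⁻¹ ^ n
    _ = 2 ^ Fintype.card ι := by
        rw [ENNReal.tsum_geometric, ENNReal.one_sub_inv_two, inv_inv, prod_const, card_univ]

section IsIIDPoisson

variable {d : ℕ} {lam : ℝ} {μ : Measure ((Fin d → ℤ) → ℕ)}

lemma IsIIDPoisson.measure_cylinder_le (hμ : IsIIDPoisson d lam μ) (hlam : 0 ≤ lam)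
    (F : Finset (Fin d → ℤ)) (k : (Fin d → ℤ) → ℕ) :
    μ {ζ | ∀ j ∈ F, ζ j = k j} ≤ ENNReal.ofReal lam ^ ∑ j ∈ F, k j := by
  rw [hμ.2, ← prod_pow_eq_pow_sum]
  gcongr with j
  rw [← ENNReal.ofReal_pow hlam]
  exact ENNReal.ofReal_le_ofReal (poissonPMFR_le_pow hlam _)

/-- Union bound over the cylinders `ζ|_F = k` with `∑ k > T`: each has probability at most
`λ^{∑ k} ≤ (2λ)^T 2^{-∑ k}`, and `∑_k 2^{-∑ k} = 2^{|F|}`. -/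
lemma IsIIDPoisson.measure_lt_sum_le (hμ : IsIIDPoisson d lam μ) (hlam : 0 < lam)
    (h2lam : 2 * lam ≤ 1) (F : Finset (Fin d → ℤ)) (T : ℝ) :
    μ {ζ | T < ((∑ j ∈ F, ζ j : ℕ) : ℝ)}
      ≤ ENNReal.ofReal ((2 * lam) ^ T) * 2 ^ F.card := by
  classical
  let extend (k : F → ℕ) (j : Fin d → ℤ) : ℕ := if h : j ∈ F then k ⟨j, h⟩ else 0
  have hsum (k : F → ℕ) : ∑ j ∈ F, extend k j = ∑ j, k j := by
    rw [← sum_coe_sort F]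
    exact sum_congr rfl fun j _ => by simp [extend]
  have hcover : {ζ : (Fin d → ℤ) → ℕ | T < ((∑ j ∈ F, ζ j : ℕ) : ℝ)} ⊆
      ⋃ k : {k : F → ℕ // T < ((∑ j, k j : ℕ) : ℝ)},
        {ζ | ∀ j ∈ F, ζ j = extend k j} := by
    intro ζ hζ
    refine Set.mem_iUnion.mpr ⟨⟨fun j => ζ j, ?_⟩, fun j hj => by simp [extend, hj]⟩
    rwa [sum_coe_sort F ζ]
  have hterm (k : F → ℕ) (hk : T < ((∑ j, k j : ℕ) : ℝ)) :
      μ {ζ | ∀ j ∈ F, ζ j = extend k j}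
        ≤ ENNReal.ofReal ((2 * lam) ^ T) * ∏ j, (2⁻¹ : ℝ≥0∞) ^ k j := by
    set s := ∑ j, k j
    have hpow : lam ^ s ≤ (2 * lam) ^ T * 2⁻¹ ^ s := by
      calc lam ^ s = (2 * lam) ^ (s : ℝ) * 2⁻¹ ^ s := by
            rw [Real.rpow_natCast, ← mul_pow]; ring_nf
        _ ≤ (2 * lam) ^ T * 2⁻¹ ^ s := by
            gcongr ?_ * _
            exact Real.rpow_le_rpow_of_exponent_ge (by positivity) h2lam hk.le
    calc μ {ζ | ∀ j ∈ F, ζ j = extend k j} ≤ ENNReal.ofReal lam ^ s := by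
          simpa only [hsum] using hμ.measure_cylinder_le hlam.le F (extend k)
      _ ≤ ENNReal.ofReal ((2 * lam) ^ T * 2⁻¹ ^ s) := by
          rw [← ENNReal.ofReal_pow hlam.le]; exact ENNReal.ofReal_le_ofReal hpow
      _ = ENNReal.ofReal ((2 * lam) ^ T) * ∏ j, (2⁻¹ : ℝ≥0∞) ^ k j := by
          rw [ENNReal.ofReal_mul (by positivity), prod_pow_eq_pow_sum,
            ENNReal.ofReal_pow (by norm_num), ENNReal.ofReal_inv_of_pos two_pos,
            ENNReal.ofReal_ofNat]
  calc μ {ζ | T < ((∑ j ∈ F, ζ j : ℕ) : ℝ)}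
      ≤ ∑' k : {k : F → ℕ // T < ((∑ j, k j : ℕ) : ℝ)},
          μ {ζ | ∀ j ∈ F, ζ j = extend k j} :=
        (measure_mono hcover).trans (measure_iUnion_le _)
    _ ≤ ∑' k : {k : F → ℕ // T < ((∑ j, k j : ℕ) : ℝ)},
          ENNReal.ofReal ((2 * lam) ^ T) * ∏ j, (2⁻¹ : ℝ≥0∞) ^ k.1 j :=
        ENNReal.tsum_le_tsum fun k => hterm k k.2
    _ ≤ ∑' k : F → ℕ, ENNReal.ofReal ((2 * lam) ^ T) * ∏ j, (2⁻¹ : ℝ≥0∞) ^ k j :=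
        ENNReal.tsum_comp_le_tsum_of_injective Subtype.val_injective _
    _ ≤ ENNReal.ofReal ((2 * lam) ^ T) * 2 ^ F.card := by
        rw [ENNReal.tsum_mul_left, ← Fintype.card_coe F]
        gcongr
        exact ENNReal.tsum_prod_inv_two_pow_le F

end IsIIDPoisson

lemma rpow_mul_two_pow_le_exp {x p c K A : ℝ} {n : ℕ} (hx : 0 < x) (hp : 0 < p)
    (hA : 0 ≤ A) (hxle : x ≤ Real.exp (-(c + K * Real.log 2) / p)) (hn : (n : ℝ) ≤ K * A) :
    x ^ (p * A) * 2 ^ n ≤ Real.exp (-(c * A)) := by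
  have htwo : (2 : ℝ) ^ n ≤ Real.exp (K * A * Real.log 2) := by
    rw [← Real.rpow_natCast, Real.rpow_def_of_pos two_pos, mul_comm]
    gcongr
  calc x ^ (p * A) * 2 ^ n
      ≤ Real.exp (-(c + K * Real.log 2) / p) ^ (p * A) * Real.exp (K * A * Real.log 2) := by
        gcongr
    _ = Real.exp (-(c * A)) := by
        rw [← Real.exp_mul, ← Real.exp_add]
        congr 1
        field_simp
        ring

/-- Let `d ≥ 2` and `C > 0`. There exists `λ₀ > 0` such that for
every `λ ∈ (0, λ₀]` and every `a ≥ π_d^(−1/d)`,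
`μ_λ({ζ : R_0(ζ) > a}) ≤ exp(−C·a^d)`, where `μ_λ` is the product probability
measure on `ℕ^{ℤ^d}` whose coordinates are i.i.d. Poisson with parameter `λ`. -/
theorem statement9 (d : ℕ) (hd : 2 ≤ d) (C : ℝ) (hC : 0 < C) :
    ∃ lam0 : ℝ, 0 < lam0 ∧
      ∀ lam : ℝ, 0 < lam → lam ≤ lam0 →
        ∀ μ : Measure ((Fin d → ℤ) → ℕ), IsIIDPoisson d lam μ →
          ∀ a : ℝ, (unitBallVol d) ^ (-(1 : ℝ) / d) ≤ a →
            μ {ζ | ENNReal.ofReal a < Rad d ζ 0}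
              ≤ ENNReal.ofReal (Real.exp (-(C * a ^ d))) := by
  have hπ : 0 < unitBallVol d := unitBallVol_pos (by omega)
  have hβ := betaD_nonneg d
  set K := (2 * betaD d + 3 * unitBallVol d ^ ((1 : ℝ) / d)) ^ d
  have hK : 0 ≤ K := by positivity
  refine ⟨Real.exp (-(C + K * Real.log 2) / unitBallVol d) / 2, by positivity, ?_⟩
  intro lam hlam hlam0 μ hμ a ha
  have ha0 : 0 < a := (Real.rpow_pos_of_pos hπ _).trans_le ha
  have hscale : 1 ≤ unitBallVol d ^ ((1 : ℝ) / d) * a :=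
    (inv_le_iff_one_le_mul₀' (by positivity)).mp (by rwa [neg_div, Real.rpow_neg hπ.le] at ha)
  set F := latticeBox d 0 ⌊betaD d * a + 1⌋
  have hcard : (F.card : ℝ) ≤ K * a ^ d :=
    calc (F.card : ℝ) ≤ (2 * (betaD d * a) + 3) ^ d :=
          card_latticeBox_floor_le d 0 (by positivity)
      _ ≤ ((2 * betaD d + 3 * unitBallVol d ^ ((1 : ℝ) / d)) * a) ^ d := by gcongr; nlinarith
      _ = K * a ^ d := mul_pow _ _ _
  have h2lam : 2 * lam ≤ Real.exp (-(C + K * Real.log 2) / unitBallVol d) := by linarith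
  have h2lam_le_one : 2 * lam ≤ 1 :=
    h2lam.trans (Real.exp_le_one_iff.mpr (div_nonpos_of_nonpos_of_nonneg
      (by nlinarith [Real.log_nonneg one_le_two]) hπ.le))
  have hevent : {ζ | ENNReal.ofReal a < Rad d ζ 0} ⊆
      {ζ | unitBallVol d * a ^ d < ((∑ j ∈ F, ζ j : ℕ) : ℝ)} := fun ζ hζ =>
    not_le.mp fun h => (Rad_le_ofReal ζ 0 ha0 h).not_gt hζ
  calc μ {ζ | ENNReal.ofReal a < Rad d ζ 0}
      ≤ ENNReal.ofReal ((2 * lam) ^ (unitBallVol d * a ^ d)) * 2 ^ F.card :=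
        (measure_mono hevent).trans (hμ.measure_lt_sum_le hlam h2lam_le_one F _)
    _ = ENNReal.ofReal ((2 * lam) ^ (unitBallVol d * a ^ d) * 2 ^ F.card) := by
        rw [ENNReal.ofReal_mul (by positivity), ENNReal.ofReal_pow zero_le_two,
          ENNReal.ofReal_ofNat]
    _ ≤ ENNReal.ofReal (Real.exp (-(C * a ^ d))) :=
        ENNReal.ofReal_le_ofReal
          (rpow_mul_two_pow_le_exp (by positivity) hπ (by positivity) h2lam hcard)
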